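/- arXiv:1708.03368 — 5 statements merged into one kernel-verified Lean document; each statement's English description precedes it below -/
import Mathlib

section
/- Let $A_n = \frac{(1-abq^n)(1-acq^n)(1-adq^n)(1-abcdq^{n-1})}{a(1-abcdq^{2n-1})(1-abcdq^{2n})}$ be the Askey-Wilson recurrence coefficient. With the parametrization $b = a^{-1}q^{-j+e_1 t}$, $d = c^{-1}q^{-j+e_2 t}$ (with $e_1, e_2 > 0$), one has $\lim_{t\to 0} A_j = \frac{e_1}{e_1+e_2}\cdot\frac{(1-acq^j)(c-a)(1-q^{-j-1})}{ac(1-q^{-1})}$. -/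
open Filter Topology

set_option maxHeartbeats 1000000 in
/-- Limit of the Askey-Wilson recurrence coefficient `A_j` under the
singular parametrization `b = a⁻¹ q^(-j + e₁ t)`, `d = c⁻¹ q^(-j + e₂ t)` as `t → 0`. -/
theorem stmt_0 (q a c e1 e2 : ℝ) (hq0 : 0 < q) (hq1 : q < 1)
    (ha : a ≠ 0) (hc : c ≠ 0) (j : ℕ) (he1 : 0 < e1) (he2 : 0 < e2)
    (b d : ℝ → ℝ)
    (hb : ∀ t, b t = a⁻¹ * Real.exp ((-(j : ℝ) + e1 * t) * Real.log q))
    (hd : ∀ t, d t = c⁻¹ * Real.exp ((-(j : ℝ) + e2 * t) * Real.log q))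
    (A : ℝ → ℝ)
    (hA : ∀ t, A t =
      ((1 - a * b t * q ^ j) * (1 - a * c * q ^ j) * (1 - a * d t * q ^ j) *
          (1 - a * b t * c * d t * (q : ℝ) ^ ((j : ℤ) - 1))) /
        (a * (1 - a * b t * c * d t * (q : ℝ) ^ (2 * (j : ℤ) - 1)) *
          (1 - a * b t * c * d t * (q : ℝ) ^ (2 * (j : ℤ)))))
    (hden : ∀ᶠ t in 𝓝[≠] (0 : ℝ),
      a * (1 - a * b t * c * d t * (q : ℝ) ^ (2 * (j : ℤ) - 1)) *
        (1 - a * b t * c * d t * (q : ℝ) ^ (2 * (j : ℤ))) ≠ 0) :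
    Tendsto A (𝓝[≠] (0 : ℝ))
      (𝓝 (e1 / (e1 + e2) *
        ((1 - a * c * q ^ j) * (c - a) * (1 - (q : ℝ) ^ (-(j : ℤ) - 1))) /
        (a * c * (1 - (q : ℝ) ^ (-1 : ℤ))))) := by
  set L := Real.log q with hLdef
  have hq : q ≠ 0 := hq0.ne'
  have hL : L < 0 := Real.log_neg hq0 hq1
  set P : ℝ := q ^ j with hPdef
  have hP : P ≠ 0 := pow_ne_zero _ hq
  set u : ℝ → ℝ := fun t => Real.exp (e1 * t * L) with hudef
  set v : ℝ → ℝ := fun t => Real.exp (e2 * t * L) with hvdef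
  have huv : ∀ t, u t * v t = Real.exp ((e1 + e2) * t * L) := by
    intro t
    rw [hudef, hvdef, ← Real.exp_add]
    ring_nf
  -- exponentials versus powers
  have hexpj : Real.exp ((j : ℝ) * L) = P := by
    rw [Real.exp_nat_mul, hLdef, Real.exp_log hq0]
  have hub : ∀ t, Real.exp ((-(j : ℝ) + e1 * t) * L) = P⁻¹ * u t := by
    intro t
    show Real.exp ((-(j : ℝ) + e1 * t) * L) = P⁻¹ * Real.exp (e1 * t * L)
    rw [← hexpj, ← Real.exp_neg, ← Real.exp_add]
    congr 1
    ring
  have hvb : ∀ t, Real.exp ((-(j : ℝ) + e2 * t) * L) = P⁻¹ * v t := by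
    intro t
    show Real.exp ((-(j : ℝ) + e2 * t) * L) = P⁻¹ * Real.exp (e2 * t * L)
    rw [← hexpj, ← Real.exp_neg, ← Real.exp_add]
    congr 1
    ring
  clear_value L P u v
  -- zpow conversions
  have hz1 : (q : ℝ) ^ ((j : ℤ) - 1) = P * q⁻¹ := by
    rw [zpow_sub₀ hq, zpow_natCast, zpow_one, hPdef, div_eq_mul_inv]
  have hz2 : (q : ℝ) ^ (2 * (j : ℤ) - 1) = P ^ 2 * q⁻¹ := by
    rw [zpow_sub₀ hq, zpow_one, div_eq_mul_inv, hPdef]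
    congr 1
    rw [show (2 : ℤ) * (j : ℤ) = ((2 * j : ℕ) : ℤ) by push_cast; ring, zpow_natCast,
      pow_mul', sq]
  have hz3 : (q : ℝ) ^ (2 * (j : ℤ)) = P ^ 2 := by
    rw [show (2 : ℤ) * (j : ℤ) = ((2 * j : ℕ) : ℤ) by push_cast; ring, zpow_natCast,
      hPdef, pow_mul', sq]
  have hz4 : (q : ℝ) ^ (-(j : ℤ) - 1) = P⁻¹ * q⁻¹ := by
    rw [zpow_sub₀ hq, zpow_one, zpow_neg, zpow_natCast, hPdef, div_eq_mul_inv]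
  have hz5 : (q : ℝ) ^ (-1 : ℤ) = q⁻¹ := by rw [zpow_neg, zpow_one]
  -- the key pointwise factorization
  have hkey : ∀ t, A t =
      ((1 - u t) / (1 - u t * v t)) *
        (((1 - a * c * P) * (1 - a / c * v t) * (1 - P⁻¹ * q⁻¹ * (u t * v t))) /
          (a * (1 - q⁻¹ * (u t * v t)))) := by
    intro t
    rw [hA t, hb t, hd t, hub t, hvb t, hz1, hz2, hz3, div_mul_div_comm]
    congr 1
    · field_simp
    · field_simp
  -- slope limits
  have hslope : ∀ e : ℝ, Tendsto (fun t => (Real.exp (e * t * L) - 1) / t)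
      (𝓝[≠] (0 : ℝ)) (𝓝 (e * L)) := by
    intro e
    have hd1 : HasDerivAt (fun t : ℝ => Real.exp (e * t * L)) (e * L) 0 := by
      have h1 : HasDerivAt (fun t : ℝ => e * t * L) (e * L) 0 := by
        simpa using ((hasDerivAt_id (0 : ℝ)).const_mul e).mul_const L
      simpa using h1.exp
    have := hasDerivAt_iff_tendsto_slope.mp hd1
    refine this.congr (fun t => ?_)
    simp [slope_fun_def]
    ring_nf
  have hne : (e1 + e2) * L ≠ 0 :=
    mul_ne_zero (by positivity) hL.ne
  have hG : Tendsto (fun t => (1 - u t) / (1 - u t * v t)) (𝓝[≠] (0 : ℝ))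
      (𝓝 (e1 / (e1 + e2))) := by
    have h2 := hslope (e1 + e2)
    have h := (hslope e1).div h2 hne
    have hval : e1 * L / ((e1 + e2) * L) = e1 / (e1 + e2) :=
      mul_div_mul_right _ _ hL.ne
    rw [hval] at h
    refine h.congr' ?_
    filter_upwards [self_mem_nhdsWithin] with t ht
    have ht' : (t : ℝ) ≠ 0 := ht
    simp only [Pi.div_apply]
    rw [huv t, div_div_div_cancel_right₀ ht']
    rw [show Real.exp (e1 * t * L) - 1 = -(1 - u t) from by
        simp only [hudef]; ring,
      show Real.exp ((e1 + e2) * t * L) - 1 = -(1 - u t * v t) from by rw [huv t]; ring,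
      neg_div_neg_eq, huv t]
  have hH : Tendsto (fun t =>
      ((1 - a * c * P) * (1 - a / c * v t) * (1 - P⁻¹ * q⁻¹ * (u t * v t))) /
        (a * (1 - q⁻¹ * (u t * v t)))) (𝓝[≠] (0 : ℝ))
      (𝓝 (((1 - a * c * P) * (1 - a / c) * (1 - P⁻¹ * q⁻¹)) / (a * (1 - q⁻¹)))) := by
    have hu0 : ContinuousAt u 0 := by
      rw [hudef]; fun_prop
    have hv0 : ContinuousAt v 0 := by
      rw [hvdef]; fun_prop
    have hu1 : u 0 = 1 := by simp [hudef]
    have hv1 : v 0 = 1 := by simp [hvdef]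
    have hden0 : a * (1 - q⁻¹ * (u 0 * v 0)) ≠ 0 := by
      rw [hu1, hv1]
      have : (1 : ℝ) < q⁻¹ := (one_lt_inv₀ hq0).mpr hq1
      exact mul_ne_zero ha (by nlinarith)
    have hcont : ContinuousAt (fun t =>
        ((1 - a * c * P) * (1 - a / c * v t) * (1 - P⁻¹ * q⁻¹ * (u t * v t))) /
          (a * (1 - q⁻¹ * (u t * v t)))) 0 := by
      apply ContinuousAt.div
      · fun_prop
      · fun_prop
      · exact hden0
    have hval0 : ((1 - a * c * P) * (1 - a / c * v 0) * (1 - P⁻¹ * q⁻¹ * (u 0 * v 0))) /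
        (a * (1 - q⁻¹ * (u 0 * v 0)))
        = ((1 - a * c * P) * (1 - a / c) * (1 - P⁻¹ * q⁻¹)) / (a * (1 - q⁻¹)) := by
      rw [hu1, hv1]; norm_num
    rw [← hval0]
    exact hcont.tendsto.mono_left nhdsWithin_le_nhds
  have hmain := hG.mul hH
  have final := Tendsto.congr (fun t => (hkey t).symm) hmain
  have h1q : (1 : ℝ) - q⁻¹ ≠ 0 := by
    have : (1 : ℝ) < q⁻¹ := (one_lt_inv₀ hq0).mpr hq1
    nlinarith
  have hval2 : e1 / (e1 + e2) *
        ((1 - a * c * P) * (c - a) * (1 - (q : ℝ) ^ (-(j : ℤ) - 1))) /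
        (a * c * (1 - (q : ℝ) ^ (-1 : ℤ)))
      = e1 / (e1 + e2) *
        (((1 - a * c * P) * (1 - a / c) * (1 - P⁻¹ * q⁻¹)) / (a * (1 - q⁻¹))) := by
    rw [hz4, hz5, hPdef]
    rw [show (1 : ℝ) - a / c = (c - a) / c from by field_simp]
    field_simp
  rw [hval2]
  exact final
end

section
/- For $N = 2j+1$ and $\alpha = 1/2$, the recurrence coefficients of the $q$-para-Racah polynomials are persymmetric: $b_n = b_{N-n}$ for $0 \le n \le N$ and $u_n = u_{N-n+1}$ for $1 \le n \le N$. -/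
/-- For `N = 2j+1` and `α = 1/2`, the recurrence coefficients of the
`q`-para-Racah polynomials are persymmetric. -/
theorem stmt_2 (q a c : ℝ) (hq0 : 0 < q) (hq1 : q < 1)
    (ha : a ≠ 0) (hc : c ≠ 0) (hac : a ≠ c) (j N : ℕ) (hN : N = 2 * j + 1)
    (α : ℝ) (hα : α = 1 / 2)
    (b u : ℕ → ℝ)
    (hb : ∀ n, n ≤ N → n ≠ j → n ≠ j + 1 →
      b n = ((a + c) * (q ^ (j + 1) + 1) * q ^ n * (a * c * q ^ j + 1)) /
        (2 * a * c * (q ^ j + q ^ n) * (q ^ (j + 1) + q ^ n)))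
    (hbj : b j = (a + a⁻¹) / 2 +
      α * (c - a) * (q ^ (j + 1) - 1) * (q : ℝ) ^ (-(j : ℤ)) * (a * c * q ^ j - 1) /
        (2 * a * c * (q - 1)) -
      (q ^ j - 1) * (q : ℝ) ^ (-(j : ℤ)) * (c - a * q) * (a * c * q ^ (j + 1) - 1) /
        (2 * a * c * (q ^ 2 - 1)))
    (hbj1 : b (j + 1) = (a + a⁻¹) / 2 +
      (1 - α) * (c - a) * (q ^ (j + 1) - 1) * (q : ℝ) ^ (-(j : ℤ)) * (a * c * q ^ j - 1) /
        (2 * a * c * (q - 1)) -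
      (q ^ j - 1) * (q : ℝ) ^ (-(j : ℤ)) * (c - a * q) * (a * c * q ^ (j + 1) - 1) /
        (2 * a * c * (q ^ 2 - 1)))
    (hu : ∀ n, 1 ≤ n → n ≤ N → n ≠ j + 1 →
      u n = ((q ^ n - 1) * (q ^ n - q ^ (2 * j + 2)) * (a * c * q ^ n - q) *
          (q ^ n - a * c * q ^ (2 * j + 1)) * (a * q ^ n - c * q ^ (j + 1)) *
          (c * q ^ n - a * q ^ (j + 1))) /
        (4 * a ^ 2 * c ^ 2 * (q ^ (j + 1) + q ^ n) ^ 2 *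
          (q ^ (2 * n) - q ^ (2 * j + 1)) * (q ^ (2 * n) - q ^ (2 * j + 3))))
    (huj1 : u (j + 1) = α * (1 - α) * (c - a) ^ 2 * (q : ℝ) ^ (-2 * (j : ℤ)) *
      (q ^ (j + 1) - 1) ^ 2 * (a * c * q ^ j - 1) ^ 2 / (4 * a ^ 2 * c ^ 2 * (q - 1) ^ 2)) :
    (∀ n, n ≤ N → b n = b (N - n)) ∧ (∀ n, 1 ≤ n → n ≤ N → u n = u (N - n + 1)) := by
  have hqne : (q : ℝ) ≠ 0 := ne_of_gt hq0
  have hpne : ∀ s t : ℕ, s ≠ t → q ^ s ≠ q ^ t := by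
    intro s t hst heq
    rcases hst.lt_or_gt with h | h
    · exact absurd heq.symm (ne_of_lt (pow_lt_pow_right_of_lt_one₀ hq0 hq1 h))
    · exact absurd heq (ne_of_lt (pow_lt_pow_right_of_lt_one₀ hq0 hq1 h))
  have hbjj1 : b j = b (j + 1) := by
    rw [hbj, hbj1, hα]; norm_num
  constructor
  · intro n hn
    by_cases h1 : n = j
    · have hm : N - n = j + 1 := by omega
      rw [hm, h1, hbjj1]
    · by_cases h2 : n = j + 1
      · have hm : N - n = j := by omega
        rw [hm, h2, hbjj1]
      · set m := N - n with hmdef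
        have hmN : m ≤ N := by omega
        have hmj : m ≠ j := by omega
        have hmj1 : m ≠ j + 1 := by omega
        have hnm : n + m = 2 * j + 1 := by omega
        have hxy : q ^ n * q ^ m = q * (q ^ j) ^ 2 := by
          rw [← pow_add, hnm]; ring
        have hy : q ^ m = q * (q ^ j) ^ 2 / q ^ n := by
          rw [eq_div_iff (pow_ne_zero n hqne), mul_comm]; exact hxy
        rw [hb n hn h1 h2, hb m hmN hmj hmj1]
        have d1 : 2 * a * c * (q ^ j + q ^ n) * (q ^ (j + 1) + q ^ n) ≠ 0 := by
          positivity
        have d2 : 2 * a * c * (q ^ j + q ^ m) * (q ^ (j + 1) + q ^ m) ≠ 0 := by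
          positivity
        rw [div_eq_div_iff d1 d2]
        have e3 : q ^ (j + 1) = q * q ^ j := by ring
        rw [e3, hy]
        field_simp
        ring
  · intro n hn1 hnN
    by_cases h2 : n = j + 1
    · have hm : N - n + 1 = j + 1 := by omega
      rw [hm, h2]
    · set m := N - n + 1 with hmdef
      have hm1 : 1 ≤ m := by omega
      have hmN : m ≤ N := by omega
      have hmj1 : m ≠ j + 1 := by omega
      have hnm : n + m = 2 * j + 2 := by omega
      have hxy : q ^ n * q ^ m = q ^ 2 * (q ^ j) ^ 2 := by
        rw [← pow_add, hnm]; ring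
      have hy : q ^ m = q ^ 2 * (q ^ j) ^ 2 / q ^ n := by
        rw [eq_div_iff (pow_ne_zero n hqne), mul_comm]; exact hxy
      rw [hu n hn1 hnN h2, hu m hm1 hmN hmj1]
      have d1 : 4 * a ^ 2 * c ^ 2 * (q ^ (j + 1) + q ^ n) ^ 2 *
          (q ^ (2 * n) - q ^ (2 * j + 1)) * (q ^ (2 * n) - q ^ (2 * j + 3)) ≠ 0 := by
        have h21 : q ^ (2 * n) - q ^ (2 * j + 1) ≠ 0 :=
          sub_ne_zero_of_ne (hpne _ _ (by omega))
        have h23 : q ^ (2 * n) - q ^ (2 * j + 3) ≠ 0 :=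
          sub_ne_zero_of_ne (hpne _ _ (by omega))
        have hsum : (q ^ (j + 1) + q ^ n) ^ 2 ≠ 0 := by positivity
        have h4 : (4 : ℝ) * a ^ 2 * c ^ 2 ≠ 0 := by positivity
        exact mul_ne_zero (mul_ne_zero (mul_ne_zero h4 hsum) h21) h23
      have d2 : 4 * a ^ 2 * c ^ 2 * (q ^ (j + 1) + q ^ m) ^ 2 *
          (q ^ (2 * m) - q ^ (2 * j + 1)) * (q ^ (2 * m) - q ^ (2 * j + 3)) ≠ 0 := by
        have h21 : q ^ (2 * m) - q ^ (2 * j + 1) ≠ 0 :=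
          sub_ne_zero_of_ne (hpne _ _ (by omega))
        have h23 : q ^ (2 * m) - q ^ (2 * j + 3) ≠ 0 :=
          sub_ne_zero_of_ne (hpne _ _ (by omega))
        have hsum : (q ^ (j + 1) + q ^ m) ^ 2 ≠ 0 := by positivity
        have h4 : (4 : ℝ) * a ^ 2 * c ^ 2 ≠ 0 := by positivity
        exact mul_ne_zero (mul_ne_zero (mul_ne_zero h4 hsum) h21) h23
      rw [div_eq_div_iff d1 d2]
      have e1 : q ^ (2 * j + 2) = q ^ 2 * (q ^ j) ^ 2 := by ring
      have e2 : q ^ (2 * j + 1) = q * (q ^ j) ^ 2 := by ring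
      have e3 : q ^ (j + 1) = q * q ^ j := by ring
      have e4 : q ^ (2 * j + 3) = q ^ 3 * (q ^ j) ^ 2 := by ring
      have e5 : q ^ (2 * n) = (q ^ n) ^ 2 := by ring
      have e6 : q ^ (2 * m) = (q ^ m) ^ 2 := by ring
      rw [e1, e2, e3, e4, e5, e6, hy]
      field_simp
      ring
end

section
/- For $N=2j+1$, $0<q<1$, $0<\alpha<1$, $c\neq a$, $q < a/c < q^{-1}$, and either $ac<1$ or $ac>q^{1-N}$, the recurrence coefficients $u_n$ of the $q$-para-Racah polynomials satisfy $u_n > 0$ for all $n = 1, \dots, N$. -/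
/-- Positivity of the recurrence coefficients `u_n` of the `q`-para-Racah
polynomials for `N = 2j+1` under the stated parameter conditions. -/
theorem stmt_3 (q a c α : ℝ) (hq0 : 0 < q) (hq1 : q < 1)
    (ha : 0 < a) (hc : 0 < c) (hα0 : 0 < α) (hα1 : α < 1) (hac : c ≠ a)
    (j N : ℕ) (hN : N = 2 * j + 1)
    (h1 : q < a / c) (h2 : a / c < q⁻¹)
    (h3 : a * c < 1 ∨ a * c > (q : ℝ) ^ (1 - (N : ℤ)))
    (u : ℕ → ℝ)
    (hu : ∀ n, 1 ≤ n → n ≤ N → n ≠ j + 1 →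
      u n = ((q ^ n - 1) * (q ^ n - q ^ (2 * j + 2)) * (a * c * q ^ n - q) *
          (q ^ n - a * c * q ^ (2 * j + 1)) * (a * q ^ n - c * q ^ (j + 1)) *
          (c * q ^ n - a * q ^ (j + 1))) /
        (4 * a ^ 2 * c ^ 2 * (q ^ (j + 1) + q ^ n) ^ 2 *
          (q ^ (2 * n) - q ^ (2 * j + 1)) * (q ^ (2 * n) - q ^ (2 * j + 3))))
    (huj1 : u (j + 1) = α * (1 - α) * (c - a) ^ 2 * (q : ℝ) ^ (-2 * (j : ℤ)) *
      (q ^ (j + 1) - 1) ^ 2 * (a * c * q ^ j - 1) ^ 2 / (4 * a ^ 2 * c ^ 2 * (q - 1) ^ 2)) :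
    ∀ n, 1 ≤ n → n ≤ N → 0 < u n := by
  subst hN
  -- basic facts
  have hqc : q * c < a := by
    have := (lt_div_iff₀ hc).mp h1
    linarith
  have hqa : q * a < c := by
    have h2' : a < q⁻¹ * c := (div_lt_iff₀ hc).mp h2
    have h3' := mul_lt_mul_of_pos_right h2' hq0
    have hinv : q⁻¹ * q = 1 := inv_mul_cancel₀ hq0.ne'
    nlinarith
  -- rewritten form of the right case of h3
  have h3' : a * c < 1 ∨ 1 < a * c * q ^ (2 * j) := by
    rcases h3 with h | h
    · exact Or.inl h
    · right
      have hexp : (1 : ℤ) - (↑(2 * j + 1) : ℤ) = -(2 * j : ℕ) := by push_cast; ring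
      rw [hexp, zpow_neg, zpow_natCast] at h
      have hp : (0:ℝ) < q ^ (2 * j) := pow_pos hq0 _
      have hcancel : (q ^ (2 * j))⁻¹ * q ^ (2 * j) = 1 := inv_mul_cancel₀ hp.ne'
      nlinarith [mul_lt_mul_of_pos_right h hp]
  intro n hn1 hnN
  by_cases hne : n = j + 1
  · -- middle coefficient
    subst hne
    rw [huj1]
    apply div_pos
    · have k1 : (0:ℝ) < 1 - α := by linarith
      have k2 : c - a ≠ 0 := sub_ne_zero.mpr hac
      have k3 : (0:ℝ) < q ^ (-2 * (j : ℤ)) := zpow_pos hq0 _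
      have k4 : q ^ (j + 1) - 1 ≠ 0 := by
        have : q ^ (j + 1) < 1 := pow_lt_one₀ hq0.le hq1 (by omega)
        exact sub_ne_zero.mpr this.ne
      have k5 : a * c * q ^ j - 1 ≠ 0 := by
        rcases h3' with h | h
        · have hj1 : q ^ j ≤ 1 := pow_le_one₀ hq0.le hq1.le
          have : a * c * q ^ j < 1 := by nlinarith [pow_pos hq0 j]
          exact sub_ne_zero.mpr this.ne
        · have hjj : q ^ (2 * j) = q ^ j * q ^ j := by rw [two_mul, pow_add]
          have hj1 : q ^ j ≤ 1 := pow_le_one₀ hq0.le hq1.le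
          have : 1 < a * c * q ^ j := by nlinarith [pow_pos hq0 j]
          exact sub_ne_zero.mpr this.ne'
      positivity
    · have : q - 1 ≠ 0 := sub_ne_zero.mpr hq1.ne
      positivity
  · -- generic coefficient
    rw [hu n hn1 hnN hne]
    have hqn : (0:ℝ) < q ^ n := pow_pos hq0 n
    have hqnq : q ^ n ≤ q := by
      calc q ^ n ≤ q ^ 1 := pow_le_pow_of_le_one hq0.le hq1.le hn1
        _ = q := pow_one q
    -- factor A : q^n < 1
    have hA : (0:ℝ) < 1 - q ^ n := by
      have := pow_lt_one₀ hq0.le hq1 (by omega : n ≠ 0)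
      linarith
    -- factor B : q^(2j+2) < q^n
    have hB : (0:ℝ) < q ^ n - q ^ (2 * j + 2) := by
      have := pow_lt_pow_right_of_lt_one₀ hq0 hq1 (by omega : n < 2 * j + 2)
      linarith
    -- factors C·D : (q - acq^n)(q^n - acq^(2j+1)) > 0
    have hN1 : q ^ (2 * j + 1) ≤ q ^ n := pow_le_pow_of_le_one hq0.le hq1.le hnN
    have hsucc : q ^ (2 * j + 1) = q ^ (2 * j) * q := pow_succ q (2 * j)
    have hCD : (0:ℝ) < (q - a * c * q ^ n) * (q ^ n - a * c * q ^ (2 * j + 1)) := by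
      rcases h3' with h | h
      · apply mul_pos
        · have := mul_lt_mul_of_pos_right h hqn
          linarith
        · have := mul_lt_mul_of_pos_right h (pow_pos hq0 (2 * j + 1))
          linarith
      · have hq' := mul_lt_mul_of_pos_right h hq0
        have e : a * c * q ^ (2 * j + 1) = a * c * q ^ (2 * j) * q := by rw [hsucc]; ring
        apply mul_pos_of_neg_of_neg
        · have hacn : a * c * q ^ (2 * j + 1) ≤ a * c * q ^ n :=
            mul_le_mul_of_nonneg_left hN1 (by positivity)
          linarith
        · linarith
    -- factors E·F
    have hEF : (0:ℝ) < (a * q ^ n - c * q ^ (j + 1)) * (c * q ^ n - a * q ^ (j + 1)) := by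
      have hsj : q ^ (j + 1) = q ^ j * q := pow_succ q j
      rcases (by omega : n ≤ j ∨ j + 2 ≤ n) with hnj | hnj
      · have hjn : q ^ j ≤ q ^ n := pow_le_pow_of_le_one hq0.le hq1.le hnj
        apply mul_pos
        · have ec : c * q ^ (j + 1) = q * c * q ^ j := by rw [hsj]; ring
          linarith [mul_lt_mul_of_pos_right hqc (pow_pos hq0 j),
            mul_le_mul_of_nonneg_left hjn ha.le, ec]
        · have ea : a * q ^ (j + 1) = q * a * q ^ j := by rw [hsj]; ring
          linarith [mul_lt_mul_of_pos_right hqa (pow_pos hq0 j),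
            mul_le_mul_of_nonneg_left hjn hc.le, ea]
      · have hjn : q ^ n ≤ q ^ (j + 2) := pow_le_pow_of_le_one hq0.le hq1.le hnj
        have hsj2 : q ^ (j + 2) = q ^ (j + 1) * q := pow_succ q (j + 1)
        apply mul_pos_of_neg_of_neg
        · have ea : a * q ^ (j + 2) = q * a * q ^ (j + 1) := by rw [hsj2]; ring
          linarith [mul_lt_mul_of_pos_right hqa (pow_pos hq0 (j + 1)),
            mul_le_mul_of_nonneg_left hjn ha.le, ea]
        · have ec : c * q ^ (j + 2) = q * c * q ^ (j + 1) := by rw [hsj2]; ring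
          linarith [mul_lt_mul_of_pos_right hqc (pow_pos hq0 (j + 1)),
            mul_le_mul_of_nonneg_left hjn hc.le, ec]
    -- numerator
    have hNum : (0:ℝ) < (q ^ n - 1) * (q ^ n - q ^ (2 * j + 2)) * (a * c * q ^ n - q) *
        (q ^ n - a * c * q ^ (2 * j + 1)) * (a * q ^ n - c * q ^ (j + 1)) *
        (c * q ^ n - a * q ^ (j + 1)) := by
      calc (0:ℝ) < ((1 - q ^ n) * (q ^ n - q ^ (2 * j + 2))) *
          ((q - a * c * q ^ n) * (q ^ n - a * c * q ^ (2 * j + 1))) *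
          ((a * q ^ n - c * q ^ (j + 1)) * (c * q ^ n - a * q ^ (j + 1))) :=
            mul_pos (mul_pos (mul_pos hA hB) hCD) hEF
        _ = (q ^ n - 1) * (q ^ n - q ^ (2 * j + 2)) * (a * c * q ^ n - q) *
            (q ^ n - a * c * q ^ (2 * j + 1)) * (a * q ^ n - c * q ^ (j + 1)) *
            (c * q ^ n - a * q ^ (j + 1)) := by ring
    -- denominator
    have hDen : (0:ℝ) < 4 * a ^ 2 * c ^ 2 * (q ^ (j + 1) + q ^ n) ^ 2 *
        (q ^ (2 * n) - q ^ (2 * j + 1)) * (q ^ (2 * n) - q ^ (2 * j + 3)) := by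
      have h4 : (0:ℝ) < 4 * a ^ 2 * c ^ 2 * (q ^ (j + 1) + q ^ n) ^ 2 := by positivity
      have hD2 : (0:ℝ) < (q ^ (2 * n) - q ^ (2 * j + 1)) * (q ^ (2 * n) - q ^ (2 * j + 3)) := by
        rcases (by omega : n ≤ j ∨ j + 2 ≤ n) with hnj | hnj
        · apply mul_pos
          · have := pow_lt_pow_right_of_lt_one₀ hq0 hq1 (by omega : 2 * n < 2 * j + 1)
            linarith
          · have := pow_lt_pow_right_of_lt_one₀ hq0 hq1 (by omega : 2 * n < 2 * j + 3)
            linarith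
        · apply mul_pos_of_neg_of_neg
          · have := pow_lt_pow_right_of_lt_one₀ hq0 hq1 (by omega : 2 * j + 1 < 2 * n)
            linarith
          · have := pow_lt_pow_right_of_lt_one₀ hq0 hq1 (by omega : 2 * j + 3 < 2 * n)
            linarith
      calc (0:ℝ) < (4 * a ^ 2 * c ^ 2 * (q ^ (j + 1) + q ^ n) ^ 2) *
          ((q ^ (2 * n) - q ^ (2 * j + 1)) * (q ^ (2 * n) - q ^ (2 * j + 3))) :=
            mul_pos h4 hD2
        _ = 4 * a ^ 2 * c ^ 2 * (q ^ (j + 1) + q ^ n) ^ 2 *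
            (q ^ (2 * n) - q ^ (2 * j + 1)) * (q ^ (2 * n) - q ^ (2 * j + 3)) := by ring
    exact div_pos hNum hDen
end

section
/- The $q$-para-Krawtchouk weights for $N=2j+1$ satisfy $\sum_{s=0}^{j} w_{2s} = 1-\alpha$ and $\sum_{s=0}^{j} w_{2s+1} = \alpha$. -/
/-- The `q`-Pochhammer symbol `(u;q)_k`. -/
def qPoch (q u : ℝ) (k : ℕ) : ℝ := ∏ m ∈ Finset.range k, (1 - u * q ^ m)

namespace QPK

lemma qPoch_zero (q u : ℝ) : qPoch q u 0 = 1 := by simp [qPoch]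

lemma qPoch_succ (q u : ℝ) (k : ℕ) :
    qPoch q u (k + 1) = qPoch q u k * (1 - u * q ^ k) := by
  simp [qPoch, Finset.prod_range_succ]

lemma qPoch_succ' (q u : ℝ) (k : ℕ) :
    qPoch q u (k + 1) = (1 - u) * qPoch q (u * q) k := by
  rw [qPoch, Finset.prod_range_succ', pow_zero, mul_one, mul_comm, qPoch]
  congr 1
  apply Finset.prod_congr rfl
  intro m _
  ring

lemma qPoch_add (q u : ℝ) (a b : ℕ) :
    qPoch q u (a + b) = qPoch q u a * qPoch q (u * q ^ a) b := by
  rw [qPoch, Finset.prod_range_add, qPoch, qPoch]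
  congr 1
  apply Finset.prod_congr rfl
  intro m _
  rw [pow_add]
  ring

lemma qPoch_pos {q u : ℝ} (hq0 : 0 < q) (hq1 : q < 1) (hu1 : u < 1)
    (k : ℕ) : 0 < qPoch q u k := by
  apply Finset.prod_pos
  intro m _
  have h1 : q ^ m ≤ 1 := pow_le_one₀ hq0.le hq1.le
  have h2 : 0 < q ^ m := pow_pos hq0 m
  rcases le_or_gt u 0 with hu | hu
  · nlinarith
  · nlinarith

def gb (q : ℝ) : ℕ → ℕ → ℝ
  | 0, 0 => 1
  | 0, _ + 1 => 0
  | _ + 1, 0 => 1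
  | n + 1, k + 1 => gb q n k + q ^ (k + 1) * gb q n (k + 1)

lemma gb_zero_right (q : ℝ) (n : ℕ) : gb q n 0 = 1 := by
  cases n <;> rfl

lemma gb_succ_succ (q : ℝ) (n k : ℕ) :
    gb q (n + 1) (k + 1) = gb q n k + q ^ (k + 1) * gb q n (k + 1) := rfl

lemma gb_eq_zero (q : ℝ) : ∀ {n k : ℕ}, n < k → gb q n k = 0 := by
  intro n
  induction n with
  | zero => intro k h; match k, h with
    | k + 1, _ => rfl
  | succ n ih =>
    intro k h
    match k, h with
    | k + 1, h =>
      rw [gb_succ_succ, ih (by omega), ih (by omega)]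
      ring

lemma gb_diag (q : ℝ) (n : ℕ) : gb q n n = 1 := by
  induction n with
  | zero => rfl
  | succ n ih => rw [gb_succ_succ, ih, gb_eq_zero q (by omega)]; ring

lemma gb_mul (q : ℝ) : ∀ (n k : ℕ), k ≤ n →
    gb q n k * qPoch q q k * qPoch q q (n - k) = qPoch q q n := by
  intro n
  induction n with
  | zero => intro k hk; interval_cases k; simp [gb, qPoch]
  | succ n ih =>
    intro k hk
    match k with
    | 0 => simp [gb_zero_right, qPoch_zero]
    | k + 1 =>
      have hk' : k ≤ n := by omega
      rcases eq_or_lt_of_le hk' with h | h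
      · subst h
        rw [gb_succ_succ, gb_eq_zero q (n := k) (k := k + 1) (by omega), gb_diag q k,
          Nat.sub_self, qPoch_zero]
        ring
      · have h1 := ih k hk'
        have h2 := ih (k + 1) (by omega)
        rw [gb_succ_succ, show n + 1 - (k + 1) = (n - (k+1)) + 1 by omega, qPoch_succ q q (n - (k+1)),
          qPoch_succ q q k, qPoch_succ q q n]
        have e0 : q ^ k * q ^ 1 * q ^ (n - (k + 1)) = q ^ n := by
          rw [← pow_add, ← pow_add]; congr 1; omega
        have e1 : q * q ^ k * (q * q ^ (n - (k + 1))) = q * q ^ n := by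
          linear_combination q * e0
        have e2 : n - k = (n - (k + 1)) + 1 := by omega
        rw [e2, qPoch_succ q q (n - (k+1))] at h1
        rw [qPoch_succ q q k] at h2
        rw [pow_succ' q k, ← e1]
        linear_combination (1 - q * q ^ k) * h1 + (q * q ^ k) * (1 - q * q ^ (n - (k+1))) * h2

lemma sum_range_id' (s : ℕ) : ∑ m ∈ Finset.range s, m = s * (s - 1) / 2 := by
  rw [Finset.sum_range_id]

lemma qPoch_flip (q u : ℝ) (hq : q ≠ 0) (hu : u ≠ 0) {s n : ℕ} (h : s ≤ n) :
    qPoch q (u * (q ^ n)⁻¹) s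
      = (-u) ^ s * q ^ (s * (s - 1) / 2) * (q ^ (n * s))⁻¹ * qPoch q (q ^ (n - s + 1) / u) s := by
  have hterm : ∀ m ∈ Finset.range s,
      (1 - u * (q ^ n)⁻¹ * q ^ m) = (-u) * q ^ m * (q ^ n)⁻¹ * (1 - q ^ (n - m) / u) := by
    intro m hm
    have hm' : m < s := Finset.mem_range.mp hm
    have hqn : (q : ℝ) ^ n ≠ 0 := pow_ne_zero _ hq
    have e : q ^ m * q ^ (n - m) = q ^ n := by
      rw [← pow_add]; congr 1; omega
    field_simp
    linear_combination (-1 : ℝ) * e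
  calc qPoch q (u * (q ^ n)⁻¹) s
      = ∏ m ∈ Finset.range s, ((-u) * q ^ m * (q ^ n)⁻¹ * (1 - q ^ (n - m) / u)) :=
        Finset.prod_congr rfl hterm
    _ = (∏ _m ∈ Finset.range s, (-u)) * (∏ m ∈ Finset.range s, q ^ m) *
          (∏ _m ∈ Finset.range s, ((q ^ n)⁻¹)) * ∏ m ∈ Finset.range s, (1 - q ^ (n - m) / u) := by
        rw [← Finset.prod_mul_distrib, ← Finset.prod_mul_distrib, ← Finset.prod_mul_distrib]
    _ = (-u) ^ s * q ^ (s * (s - 1) / 2) * (q ^ (n * s))⁻¹ * qPoch q (q ^ (n - s + 1) / u) s := by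
        rw [Finset.prod_const, Finset.prod_const, Finset.card_range,
          Finset.prod_pow_eq_pow_sum, sum_range_id', inv_pow, ← pow_mul]
        congr 1
        unfold qPoch
        rw [← Finset.prod_range_reflect (fun m => 1 - q ^ (n - m) / u) s]
        apply Finset.prod_congr rfl
        intro m hm
        have hm' : m < s := Finset.mem_range.mp hm
        rw [div_mul_eq_mul_div, ← pow_add]
        have : n - (s - 1 - m) = n - s + 1 + m := by omega
        rw [this]

lemma tri_succ (k : ℕ) : (k + 1) * (k + 1 + 1) / 2 = k * (k + 1) / 2 + (k + 1) := by
  rw [show (k + 1) * (k + 1 + 1) = k * (k + 1) + (k + 1) * 2 by ring,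
    Nat.add_mul_div_right _ _ two_pos]

/-- Key summation lemma (terminating q-Chu–Vandermonde, polynomial form). -/
lemma lemB (q : ℝ) (hq : q ≠ 0) :
    ∀ (n : ℕ) (b c : ℝ),
      ∑ k ∈ Finset.range (n + 1),
        (-1 : ℝ) ^ k * q ^ (k * (k + 1) / 2) * ((q ^ n)⁻¹) ^ k * gb q n k *
          qPoch q b k * qPoch q (c * q ^ k) (n - k)
      = ∏ m ∈ Finset.range n, (b - c * q ^ m) := by
  intro n
  induction n with
  | zero => intro b c; simp [gb, qPoch]
  | succ n ih =>
    intro b c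
    rw [Finset.sum_range_succ']
    have hsplit : ∀ k ∈ Finset.range (n + 1),
        (-1 : ℝ) ^ (k+1) * q ^ ((k+1) * (k+1+1) / 2) * ((q ^ (n+1))⁻¹) ^ (k+1) * gb q (n+1) (k+1) *
          qPoch q b (k+1) * qPoch q (c * q ^ (k+1)) (n + 1 - (k+1))
        = ((b - 1) * (q ^ n)⁻¹) *
            ((-1 : ℝ) ^ k * q ^ (k * (k + 1) / 2) * ((q ^ n)⁻¹) ^ k * gb q n k *
              qPoch q (b * q) k * qPoch q ((c * q) * q ^ k) (n - k))
          + (1 - c * q ^ n) *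
            ((-1 : ℝ) ^ (k+1) * q ^ ((k+1) * (k+1+1) / 2) * ((q ^ n)⁻¹) ^ (k+1) * gb q n (k+1) *
              qPoch q b (k+1) * qPoch q (c * q ^ (k+1)) (n - (k+1))) := by
      intro k hk
      have hk' : k ≤ n := by simpa using Nat.lt_succ_iff.mp (Finset.mem_range.mp hk)
      rw [gb_succ_succ, tri_succ, qPoch_succ' q b k,
        show n + 1 - (k + 1) = n - k by omega]
      rcases eq_or_lt_of_le hk' with h | h
      · subst h
        rw [gb_eq_zero q (show k < k + 1 by omega)]
        have hccq : (c * q) * q ^ k = c * q ^ (k + 1) := by rw [pow_succ]; ring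
        rw [hccq]
        simp only [inv_pow, ← pow_mul]
        field_simp
        ring
      · have hcc : c * q ^ (k + 1) * q ^ (n - (k + 1)) = c * q ^ n := by
          rw [mul_assoc, ← pow_add]
          congr 2
          omega
        have hpoch : qPoch q (c * q ^ (k+1)) (n - k)
            = qPoch q (c * q ^ (k+1)) (n - (k+1)) * (1 - c * q ^ n) := by
          rw [show n - k = (n - (k+1)) + 1 by omega, qPoch_succ, hcc]
        have hccq : (c * q) * q ^ k = c * q ^ (k + 1) := by rw [pow_succ]; ring
        rw [hpoch, hccq, show n - k = (n - (k+1)) + 1 by omega, qPoch_succ, hcc]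
        simp only [inv_pow, ← pow_mul]
        field_simp
        ring
    rw [Finset.sum_congr rfl hsplit, Finset.sum_add_distrib]
    have hA : ∑ k ∈ Finset.range (n + 1),
        ((b - 1) * (q ^ n)⁻¹) *
          ((-1 : ℝ) ^ k * q ^ (k * (k + 1) / 2) * ((q ^ n)⁻¹) ^ k * gb q n k *
            qPoch q (b * q) k * qPoch q ((c * q) * q ^ k) (n - k))
        = (b - 1) * ∏ m ∈ Finset.range n, (b - c * q ^ m) := by
      rw [← Finset.mul_sum, ih (b * q) (c * q)]
      have h2 : ∏ m ∈ Finset.range n, (b * q - c * q * q ^ m)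
          = q ^ n * ∏ m ∈ Finset.range n, (b - c * q ^ m) := by
        calc ∏ m ∈ Finset.range n, (b * q - c * q * q ^ m)
            = ∏ m ∈ Finset.range n, (q * (b - c * q ^ m)) := by
              apply Finset.prod_congr rfl; intro m _; ring
          _ = (∏ _m ∈ Finset.range n, q) * ∏ m ∈ Finset.range n, (b - c * q ^ m) :=
              Finset.prod_mul_distrib
          _ = q ^ n * ∏ m ∈ Finset.range n, (b - c * q ^ m) := by
              rw [Finset.prod_const, Finset.card_range]
      rw [h2]
      field_simp
    rw [hA]
    set G : ℕ → ℝ := fun i =>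
      (-1 : ℝ) ^ i * q ^ (i * (i + 1) / 2) * ((q ^ n)⁻¹) ^ i * gb q n i *
        qPoch q b i * qPoch q (c * q ^ i) (n - i) with hG
    have hGsum : ∑ i ∈ Finset.range (n + 1), G i = ∏ m ∈ Finset.range n, (b - c * q ^ m) := by
      simp only [hG]; exact ih b c
    have hGn : G (n + 1) = 0 := by
      simp [hG, gb_eq_zero q (show n < n + 1 by omega)]
    have hG0 : G 0 = qPoch q c n := by
      simp [hG, gb_zero_right, qPoch_zero]
    have hB : ∑ k ∈ Finset.range (n + 1), (1 - c * q ^ n) *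
        ((-1 : ℝ) ^ (k+1) * q ^ ((k+1) * (k+1+1) / 2) * ((q ^ n)⁻¹) ^ (k+1) * gb q n (k+1) *
          qPoch q b (k+1) * qPoch q (c * q ^ (k+1)) (n - (k+1)))
        = (1 - c * q ^ n) * (∑ i ∈ Finset.range (n + 1), G i - G 0) := by
      rw [← Finset.mul_sum]
      congr 1
      have h1 : ∑ k ∈ Finset.range (n + 1),
          ((-1 : ℝ) ^ (k+1) * q ^ ((k+1) * (k+1+1) / 2) * ((q ^ n)⁻¹) ^ (k+1) * gb q n (k+1) *
            qPoch q b (k+1) * qPoch q (c * q ^ (k+1)) (n - (k+1)))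
          = ∑ k ∈ Finset.range (n + 1), G (k + 1) := by
        apply Finset.sum_congr rfl
        intro k _
        simp only [hG]
      rw [h1, Finset.sum_range_succ, hGn, Finset.sum_range_succ' G n]
      ring
    rw [hB, hGsum, hG0]
    have hf0 : (-1:ℝ) ^ 0 * q ^ (0 * (0 + 1) / 2) * ((q ^ (n+1))⁻¹) ^ 0 * gb q (n+1) 0 *
        qPoch q b 0 * qPoch q (c * q ^ 0) (n + 1 - 0) = qPoch q c n * (1 - c * q ^ n) := by
      rw [gb_zero_right, qPoch_zero, pow_zero, mul_one, ← qPoch_succ]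
      norm_num
    rw [hf0, Finset.prod_range_succ]
    ring

lemma tri2 (s : ℕ) : s * (s + 1) / 2 = s * (s - 1) / 2 + s := by
  cases s with
  | zero => rfl
  | succ k => rw [tri_succ, Nat.succ_sub_one, Nat.mul_comm]

lemma lemC (q : ℝ) (hq0 : 0 < q) (hq1 : q < 1) (n : ℕ) (b c : ℝ)
    (hc : ∀ s, s ≤ n → qPoch q c s ≠ 0) :
    ∑ s ∈ Finset.range (n + 1),
      q ^ s * qPoch q ((q ^ n)⁻¹) s * qPoch q b s / (qPoch q q s * qPoch q c s)
    = (∏ m ∈ Finset.range n, (b - c * q ^ m)) / qPoch q c n := by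
  have hq : q ≠ 0 := ne_of_gt hq0
  rw [← lemB q hq n b c, Finset.sum_div]
  apply Finset.sum_congr rfl
  intro s hs
  have hsn : s ≤ n := by
    have := Finset.mem_range.mp hs; omega
  have hqq_s : qPoch q q s ≠ 0 := ne_of_gt (qPoch_pos hq0 hq1 hq1 s)
  have hqq_ns : qPoch q q (n - s) ≠ 0 := ne_of_gt (qPoch_pos hq0 hq1 hq1 _)
  have hflip : qPoch q ((q ^ n)⁻¹) s
      = (-1 : ℝ) ^ s * q ^ (s * (s - 1) / 2) * (q ^ (n * s))⁻¹ * qPoch q (q ^ (n - s + 1)) s := by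
    have h := qPoch_flip q 1 hq one_ne_zero hsn
    rw [one_mul] at h
    simpa using h
  have hgb : qPoch q (q ^ (n - s + 1)) s = gb q n s * qPoch q q s := by
    have h2 : qPoch q q n = qPoch q q (n - s) * qPoch q (q * q ^ (n - s)) s := by
      rw [← qPoch_add q q (n - s) s]; congr 1; omega
    have h3 := gb_mul q n s hsn
    have h4 : q * q ^ (n - s) = q ^ (n - s + 1) := by rw [pow_succ]; ring
    rw [h4] at h2
    have h5 : qPoch q (q ^ (n - s + 1)) s * qPoch q q (n - s)
        = (gb q n s * qPoch q q s) * qPoch q q (n - s) := by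
      linear_combination (-1 : ℝ) * h3 - h2
    exact mul_right_cancel₀ hqq_ns h5
  have hcn : qPoch q c n = qPoch q c s * qPoch q (c * q ^ s) (n - s) := by
    rw [← qPoch_add]; congr 1; omega
  have hCs : qPoch q c s ≠ 0 := hc s hsn
  have hCQ : qPoch q (c * q ^ s) (n - s) ≠ 0 := by
    have h6 := hc n le_rfl
    rw [hcn] at h6
    exact (mul_ne_zero_iff.mp h6).2
  rw [hflip, hgb, hcn, tri2 s, pow_add]
  have hqns : (q : ℝ) ^ (n * s) ≠ 0 := pow_ne_zero _ hq
  have hCQ' : qPoch q (q ^ s * c) (n - s) ≠ 0 := by rwa [mul_comm]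
  simp only [inv_pow, ← pow_mul]
  field_simp


/-- Product evaluation used for the lemC right-hand side. -/
lemma prodP (q : ℝ) (hq : q ≠ 0) (j : ℕ) (e : ℝ) :
    ∏ m ∈ Finset.range j, (e * (q ^ j)⁻¹ - e * q * q ^ m)
      = e ^ j * (q ^ (j * j))⁻¹ * qPoch q (q ^ (j + 1)) j := by
  have hterm : ∀ m ∈ Finset.range j,
      (e * (q ^ j)⁻¹ - e * q * q ^ m) = e * (q ^ j)⁻¹ * (1 - q ^ (j + 1) * q ^ m) := by
    intro m _
    have h1 : ((q : ℝ) ^ j)⁻¹ * q ^ (j + 1) = q := by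
      rw [pow_succ']
      field_simp
    field_simp
    ring
  calc ∏ m ∈ Finset.range j, (e * (q ^ j)⁻¹ - e * q * q ^ m)
      = ∏ m ∈ Finset.range j, (e * (q ^ j)⁻¹ * (1 - q ^ (j + 1) * q ^ m)) :=
        Finset.prod_congr rfl hterm
    _ = (∏ _m ∈ Finset.range j, (e * (q ^ j)⁻¹)) * ∏ m ∈ Finset.range j, (1 - q ^ (j + 1) * q ^ m) := by
        rw [← Finset.prod_mul_distrib]
    _ = e ^ j * (q ^ (j * j))⁻¹ * qPoch q (q ^ (j + 1)) j := by
        rw [Finset.prod_const, Finset.card_range, mul_pow, inv_pow, ← pow_mul, qPoch]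

/-- Odds/evens split of `(q;q)_{2j+1}`. -/
lemma oddEven (q : ℝ) : ∀ j : ℕ,
    qPoch q q (2 * j + 1) = qPoch (q ^ 2) (q ^ 2) j * qPoch (q ^ 2) q (j + 1) := by
  intro j
  induction j with
  | zero => simp [qPoch]
  | succ j ih =>
    have e1 : 2 * (j + 1) + 1 = (2 * j + 1) + 2 := by omega
    rw [e1, qPoch_add q q (2 * j + 1) 2]
    have p1 : q * q ^ (2 * j + 1) = q ^ (2 * j + 2) := by
      rw [← pow_succ']
    have p2 : ((q : ℝ) ^ 2) * (q ^ 2) ^ j = q ^ (2 * j + 2) := by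
      rw [← pow_mul, ← pow_add]; congr 1; omega
    have p3 : (q : ℝ) * (q ^ 2) ^ (j + 1) = q ^ (2 * j + 3) := by
      rw [← pow_mul, ← pow_succ']
      congr 1
    have h2 : qPoch q (q * q ^ (2 * j + 1)) 2 = (1 - q ^ (2 * j + 2)) * (1 - q ^ (2 * j + 3)) := by
      rw [show (2 : ℕ) = 1 + 1 from rfl, qPoch_succ, qPoch_succ, qPoch_zero, p1]
      rw [pow_one, show (q : ℝ) ^ (2*j+2) * q = q ^ (2*j+3) from by rw [← pow_succ]]
      ring
    have h3 : qPoch (q^2) (q^2) (j+1) = qPoch (q^2) (q^2) j * (1 - q ^ (2*j+2)) := by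
      rw [qPoch_succ (q^2) (q^2) j, p2]
    have h4 : qPoch (q^2) q (j+1+1) = qPoch (q^2) q (j+1) * (1 - q ^ (2*j+3)) := by
      rw [qPoch_succ (q^2) q (j+1), p3]
    rw [h2, h3, h4, ih]
    ring

/-- `(q;q)_j * (-q;q)_j = (q^2;q^2)_j`. -/
lemma evensSplit (q : ℝ) (j : ℕ) :
    qPoch q q j * qPoch q (-q) j = qPoch (q ^ 2) (q ^ 2) j := by
  rw [qPoch, qPoch, qPoch, ← Finset.prod_mul_distrib]
  apply Finset.prod_congr rfl
  intro m _
  have : ((q : ℝ) ^ 2) ^ m = (q ^ m) ^ 2 := by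
    rw [← pow_mul, ← pow_mul, mul_comm]
  rw [this]
  ring

lemma half_sq (j : ℕ) : j * (j - 1) / 2 * 2 = j * (j - 1) := by
  apply Nat.div_mul_cancel
  cases j with
  | zero => simp
  | succ k => simpa [Nat.succ_sub_one, Nat.mul_comm] using (Nat.even_mul_succ_self k).two_dvd

lemma hpow2 (q : ℝ) (j : ℕ) : ((q : ℝ) ^ (j * (j - 1) / 2)) ^ 2 * q ^ j = q ^ (j * j) := by
  rw [← pow_mul, half_sq, ← pow_add]
  congr 1
  cases j with
  | zero => simp
  | succ k => simp [Nat.succ_sub_one]; ring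

end QPK

set_option maxHeartbeats 1000000 in
open QPK in
/-- The `q`-para-Krawtchouk weights for `N = 2j+1` satisfy
`∑ w_{2s} = 1-α` and `∑ w_{2s+1} = α`. -/
theorem stmt_13 (q α Δ : ℝ) (hq0 : 0 < q) (hq1 : q < 1)
    (hα0 : 0 < α) (hα1 : α < 1) (hΔ0 : q < Δ) (hΔ1 : Δ < q⁻¹) (hΔ2 : Δ ≠ 1)
    (j N : ℕ) (hN : N = 2 * j + 1)
    (K : ℝ)
    (hK : K = ((-1 : ℝ) ^ j * q ^ (j * (j - 1)) * (1 - q ^ (2 * j + 1))) /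
      ((1 - q) * qPoch q (-q) j * qPoch (q ^ 2) ((q : ℝ) ^ (-2 * (j : ℤ) - 1)) j))
    (w : ℕ → ℝ)
    (hwe : ∀ s, s ≤ j → w (2 * s) =
      K * ((1 - α) * (1 - Δ⁻¹) * q ^ s * qPoch q (Δ * (q : ℝ) ^ (-(j : ℤ))) j *
          qPoch q ((q : ℝ) ^ (-(j : ℤ)) / Δ) j * qPoch q ((q : ℝ) ^ (-(j : ℤ))) s *
          qPoch q (Δ * (q : ℝ) ^ (-(j : ℤ))) s) /
        (qPoch q q s * qPoch q Δ⁻¹ (j + 1) * Δ ^ j * qPoch q (Δ * q) s))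
    (hwo : ∀ s, s ≤ j → w (2 * s + 1) =
      K * (α * (1 - Δ) * Δ ^ j * q ^ s * qPoch q ((q : ℝ) ^ (-(j : ℤ)) / Δ) j *
          qPoch q (Δ * (q : ℝ) ^ (-(j : ℤ))) j * qPoch q ((q : ℝ) ^ (-(j : ℤ))) s *
          qPoch q ((q : ℝ) ^ (-(j : ℤ)) / Δ) s) /
        (qPoch q q s * qPoch q Δ (j + 1) * qPoch q (q / Δ) s)) :
    (∑ s ∈ Finset.range (j + 1), w (2 * s)) = 1 - α ∧
    (∑ s ∈ Finset.range (j + 1), w (2 * s + 1)) = α := by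
  have hq : q ≠ 0 := ne_of_gt hq0
  have hΔpos : 0 < Δ := lt_trans hq0 hΔ0
  have hΔne : Δ ≠ 0 := ne_of_gt hΔpos
  have hz : (q : ℝ) ^ (-(j : ℤ)) = (q ^ j)⁻¹ := by
    rw [zpow_neg, zpow_natCast]
  have hz2 : (q : ℝ) ^ (-2 * (j : ℤ) - 1) = q⁻¹ * ((q ^ 2) ^ j)⁻¹ := by
    rw [show (-2 * (j : ℤ) - 1) = -(((2 * j + 1 : ℕ) : ℤ)) by push_cast; ring,
      zpow_neg, zpow_natCast, ← pow_mul, ← mul_inv]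
    congr 1
    rw [← pow_succ']
  simp only [hz] at hwe hwo
  simp only [hz2] at hK
  -- positivity facts
  have hq2a : (0 : ℝ) < q ^ 2 := by positivity
  have hq2b : q ^ 2 < 1 := by nlinarith
  have hΔq1 : Δ * q < 1 := by
    have := mul_lt_mul_of_pos_right hΔ1 hq0
    rwa [inv_mul_cancel₀ hq] at this
  have hΔinv : Δ⁻¹ < q⁻¹ := by
    rw [inv_lt_inv₀ hΔpos hq0]
    exact hΔ0
  have hΔiq1 : Δ⁻¹ * q < 1 := by
    have := mul_lt_mul_of_pos_right hΔinv hq0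
    rwa [inv_mul_cancel₀ hq] at this
  have hD : ∀ s : ℕ, 0 < qPoch q (Δ * q) s := fun s => qPoch_pos hq0 hq1 hΔq1 s
  have hG : ∀ s : ℕ, 0 < qPoch q (Δ⁻¹ * q) s := fun s => qPoch_pos hq0 hq1 hΔiq1 s
  have hP : ∀ s : ℕ, 0 < qPoch q q s := fun s => qPoch_pos hq0 hq1 hq1 s
  have hQD : ∀ s : ℕ, 0 < qPoch q (q / Δ) s := by
    intro s
    apply qPoch_pos hq0 hq1 _ s
    rw [div_lt_one hΔpos]
    exact hΔ0
  have hXpos : 0 < qPoch q (q ^ (j + 1)) j :=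
    qPoch_pos hq0 hq1 (pow_lt_one₀ hq0.le hq1 (Nat.succ_ne_zero j)) j
  have hXne : qPoch q (q ^ (j + 1)) j ≠ 0 := ne_of_gt hXpos
  have hMpos : 0 < qPoch q (-q) j := qPoch_pos hq0 hq1 (by linarith) j
  have hNpos : 0 < qPoch (q ^ 2) (q * q ^ 2) j := qPoch_pos hq2a hq2b (by nlinarith) j
  have hW : qPoch q Δ⁻¹ (j + 1) = (1 - Δ⁻¹) * qPoch q (Δ⁻¹ * q) j := qPoch_succ' q Δ⁻¹ j
  have hWΔ : qPoch q Δ (j + 1) = (1 - Δ) * qPoch q (Δ * q) j := qPoch_succ' q Δ j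
  have hΔi1 : (1 : ℝ) - Δ⁻¹ ≠ 0 := by
    intro h
    apply hΔ2
    have h1 : Δ⁻¹ = 1 := by linarith
    field_simp at h1
    linarith
  have hΔ11 : (1 : ℝ) - Δ ≠ 0 := by
    intro h; exact hΔ2 (by linarith)
  have hWne : qPoch q Δ⁻¹ (j + 1) ≠ 0 := by
    rw [hW]; exact mul_ne_zero hΔi1 (ne_of_gt (hG j))
  have hWΔne : qPoch q Δ (j + 1) ≠ 0 := by
    rw [hWΔ]; exact mul_ne_zero hΔ11 (ne_of_gt (hD j))
  have hBlt : q ^ (2 * j + 1) < 1 := pow_lt_one₀ hq0.le hq1 (by omega)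
  have hBne : (1 : ℝ) - q ^ (2 * j + 1) ≠ 0 := by
    have : 0 < q ^ (2 * j + 1) := pow_pos hq0 _
    intro h
    nlinarith [hBlt]
  -- the identity (1-q^{2j+1}) (q^{j+1};q)_j = (1-q)(-q;q)_j (q^3;q^2)_j
  have hID : (1 - q ^ (2 * j + 1)) * qPoch q (q ^ (j + 1)) j
      = (1 - q) * qPoch q (-q) j * qPoch (q ^ 2) (q * q ^ 2) j := by
    have H1 : qPoch q q (2 * j + 1)
        = qPoch q q j * (qPoch q (q ^ (j + 1)) j * (1 - q ^ (2 * j + 1))) := by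
      rw [show 2 * j + 1 = j + (j + 1) by omega, qPoch_add q q j (j + 1),
        show q * q ^ j = q ^ (j + 1) from by rw [← pow_succ'], qPoch_succ q (q ^ (j + 1)) j,
        show (q : ℝ) ^ (j + 1) * q ^ j = q ^ (j + (j + 1)) from by rw [← pow_add]; congr 1; omega]
    have H3 := oddEven q j
    have H4 : qPoch (q ^ 2) q (j + 1) = (1 - q) * qPoch (q ^ 2) (q * q ^ 2) j :=
      qPoch_succ' (q ^ 2) q j
    have H2 := evensSplit q j
    apply mul_right_cancel₀ (ne_of_gt (hP j))
    linear_combination (-1 : ℝ) * H1 + H3 + (qPoch (q ^ 2) (q ^ 2) j) * H4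
      - ((1 - q) * qPoch (q ^ 2) (q * q ^ 2) j) * H2
  -- flip facts
  have hF3 : qPoch (q ^ 2) (q⁻¹ * ((q ^ 2) ^ j)⁻¹) j
      = (-q⁻¹) ^ j * (q ^ 2) ^ (j * (j - 1) / 2) * ((q ^ 2) ^ (j * j))⁻¹ *
        qPoch (q ^ 2) (q * q ^ 2) j := by
    have h := qPoch_flip (q ^ 2) q⁻¹ (ne_of_gt hq2a) (inv_ne_zero hq) (le_refl j)
    rw [show ((q : ℝ) ^ 2) ^ (j - j + 1) / q⁻¹ = q * q ^ 2 from by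
      rw [Nat.sub_self, zero_add, pow_one, div_eq_mul_inv, inv_inv]; ring] at h
    exact h
  have hm1 : ((-1 : ℝ)) ^ j = q ^ j * (-q⁻¹) ^ j := by
    rw [← mul_pow, mul_neg, mul_inv_cancel₀ hq]
  have c1 : ((q : ℝ) ^ 2) ^ (j * (j - 1) / 2) = (q ^ (j * (j - 1) / 2)) ^ 2 := by
    rw [← pow_mul, ← pow_mul, mul_comm]
  have c2 : ((q : ℝ) ^ 2) ^ (j * j) = (q ^ (j * j)) ^ 2 := by
    rw [← pow_mul, ← pow_mul, mul_comm]
  have c3 : (q : ℝ) ^ (j * (j - 1)) = (q ^ (j * (j - 1) / 2)) ^ 2 := by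
    rw [← pow_mul, half_sq]
  have c4 : (q : ℝ) ^ (2 * (j * j) + j) = (q ^ (j * j)) ^ 2 * q ^ j := by
    rw [pow_add, mul_comm 2 (j * j), pow_mul]
  have hnqne : ((-q⁻¹ : ℝ)) ^ j ≠ 0 :=
    pow_ne_zero j (neg_ne_zero.mpr (inv_ne_zero hq))
  have hKMN : K * ((1 - q) * qPoch q (-q) j * qPoch (q ^ 2) (q * q ^ 2) j)
      = q ^ (2 * (j * j) + j) * (1 - q ^ (2 * j + 1)) := by
    rw [hK, hF3, hm1, c1, c2, c3, c4]
    have h1qne : (1 : ℝ) - q ≠ 0 := by intro h; nlinarith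
    have hN3 : qPoch (q ^ 2) (q ^ 3) j ≠ 0 := by
      rw [show (q : ℝ) ^ 3 = q * q ^ 2 by ring]; exact ne_of_gt hNpos
    field_simp
    ring_nf
    rw [inv_inv, inv_pow, inv_pow, inv_mul_cancel₀ (pow_ne_zero j hq), one_mul,
      inv_mul_cancel₀ (pow_ne_zero j (by norm_num : (-1 : ℝ) ≠ 0))]
  have hKX : K * qPoch q (q ^ (j + 1)) j = q ^ (2 * (j * j) + j) := by
    apply mul_right_cancel₀ hBne
    linear_combination K * hID + hKMN
  have hKeq : K = q ^ (2 * (j * j) + j) / qPoch q (q ^ (j + 1)) j := by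
    rw [eq_div_iff hXne]; exact hKX
  -- flips for Δ-pochhammers
  have hF1 : qPoch q (Δ * (q ^ j)⁻¹) j
      = (-Δ) ^ j * q ^ (j * (j - 1) / 2) * (q ^ (j * j))⁻¹ * qPoch q (Δ⁻¹ * q) j := by
    have h := qPoch_flip q Δ hq hΔne (le_refl j)
    rw [show (q : ℝ) ^ (j - j + 1) / Δ = Δ⁻¹ * q from by
      rw [Nat.sub_self, zero_add, pow_one, div_eq_inv_mul]] at h
    exact h
  have hF2 : qPoch q ((q ^ j)⁻¹ / Δ) j
      = ((-Δ) ^ j)⁻¹ * q ^ (j * (j - 1) / 2) * (q ^ (j * j))⁻¹ * qPoch q (Δ * q) j := by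
    rw [show ((q : ℝ) ^ j)⁻¹ / Δ = Δ⁻¹ * (q ^ j)⁻¹ from by rw [div_eq_inv_mul]]
    have h := qPoch_flip q Δ⁻¹ hq (inv_ne_zero hΔne) (le_refl j)
    rw [show (q : ℝ) ^ (j - j + 1) / Δ⁻¹ = Δ * q from by
      rw [Nat.sub_self, zero_add, pow_one, div_eq_mul_inv, inv_inv, mul_comm],
      show ((-Δ⁻¹ : ℝ)) ^ j = ((-Δ) ^ j)⁻¹ from by rw [← inv_pow, neg_inv]] at h
    exact h
  have hΔjne : ((-Δ : ℝ)) ^ j ≠ 0 := pow_ne_zero j (by intro h; apply hΔne; linarith)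
  have hF12 : qPoch q (Δ * (q ^ j)⁻¹) j * qPoch q ((q ^ j)⁻¹ / Δ) j
      = (q ^ (j * (j - 1) / 2)) ^ 2 * ((q ^ (j * j))⁻¹) ^ 2 *
        (qPoch q (Δ⁻¹ * q) j * qPoch q (Δ * q) j) := by
    rw [hF1, hF2]
    field_simp
  have hcE : ∀ s, s ≤ j → qPoch q (Δ * q) s ≠ 0 := fun s _ => ne_of_gt (hD s)
  have hcO : ∀ s, s ≤ j → qPoch q (q / Δ) s ≠ 0 := fun s _ => ne_of_gt (hQD s)
  constructor
  · -- even sums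
    have heven : ∑ s ∈ Finset.range (j + 1), w (2 * s)
        = (K * ((1 - α) * (1 - Δ⁻¹) * qPoch q (Δ * (q ^ j)⁻¹) j * qPoch q ((q ^ j)⁻¹ / Δ) j) /
            (qPoch q Δ⁻¹ (j + 1) * Δ ^ j)) *
          ∑ s ∈ Finset.range (j + 1),
            q ^ s * qPoch q ((q ^ j)⁻¹) s * qPoch q (Δ * (q ^ j)⁻¹) s /
              (qPoch q q s * qPoch q (Δ * q) s) := by
      rw [Finset.mul_sum]
      apply Finset.sum_congr rfl
      intro s hs
      have hsj : s ≤ j := by have := Finset.mem_range.mp hs; omega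
      rw [hwe s hsj]
      have h1 := ne_of_gt (hP s)
      have h2 := ne_of_gt (hD s)
      field_simp
    rw [heven, lemC q hq0 hq1 j (Δ * (q ^ j)⁻¹) (Δ * q) hcE, prodP q hq j Δ]
    have h3 := ne_of_gt (hD j)
    have h4 := ne_of_gt (hG j)
    rw [div_mul_div_comm,
      div_eq_iff (mul_ne_zero (mul_ne_zero hWne (pow_ne_zero j hΔne)) h3)]
    rw [show K * ((1 - α) * (1 - Δ⁻¹) * qPoch q (Δ * (q ^ j)⁻¹) j * qPoch q ((q ^ j)⁻¹ / Δ) j)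
        = K * ((1 - α) * (1 - Δ⁻¹) *
            (qPoch q (Δ * (q ^ j)⁻¹) j * qPoch q ((q ^ j)⁻¹ / Δ) j)) from by ring,
      hF12, hW, hKeq, c4, ← hpow2 q j]
    field_simp
  · -- odd sums
    have hodd : ∑ s ∈ Finset.range (j + 1), w (2 * s + 1)
        = (K * (α * (1 - Δ) * Δ ^ j * qPoch q ((q ^ j)⁻¹ / Δ) j * qPoch q (Δ * (q ^ j)⁻¹) j) /
            qPoch q Δ (j + 1)) *
          ∑ s ∈ Finset.range (j + 1),
            q ^ s * qPoch q ((q ^ j)⁻¹) s * qPoch q ((q ^ j)⁻¹ / Δ) s /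
              (qPoch q q s * qPoch q (q / Δ) s) := by
      rw [Finset.mul_sum]
      apply Finset.sum_congr rfl
      intro s hs
      have hsj : s ≤ j := by have := Finset.mem_range.mp hs; omega
      rw [hwo s hsj]
      have h1 := ne_of_gt (hP s)
      have h2 := ne_of_gt (hQD s)
      field_simp
    rw [hodd, lemC q hq0 hq1 j ((q ^ j)⁻¹ / Δ) (q / Δ) hcO]
    have hprodO : ∏ m ∈ Finset.range j, ((q ^ j)⁻¹ / Δ - q / Δ * q ^ m)
        = (Δ⁻¹) ^ j * (q ^ (j * j))⁻¹ * qPoch q (q ^ (j + 1)) j := by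
      rw [show (∏ m ∈ Finset.range j, ((q ^ j)⁻¹ / Δ - q / Δ * q ^ m))
          = ∏ m ∈ Finset.range j, (Δ⁻¹ * (q ^ j)⁻¹ - Δ⁻¹ * q * q ^ m) from
        Finset.prod_congr rfl (fun m _ => by field_simp)]
      exact prodP q hq j Δ⁻¹
    have hGq : qPoch q (q / Δ) j = qPoch q (Δ⁻¹ * q) j := by
      rw [div_eq_inv_mul]
    rw [hprodO, hGq]
    have h3 := ne_of_gt (hD j)
    have h4 := ne_of_gt (hG j)
    rw [div_mul_div_comm, div_eq_iff (mul_ne_zero hWΔne h4)]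
    rw [show K * (α * (1 - Δ) * Δ ^ j * qPoch q ((q ^ j)⁻¹ / Δ) j * qPoch q (Δ * (q ^ j)⁻¹) j)
        = K * (α * (1 - Δ) * Δ ^ j *
            (qPoch q (Δ * (q ^ j)⁻¹) j * qPoch q ((q ^ j)⁻¹ / Δ) j)) from by ring,
      hF12, hWΔ, hKeq, c4, ← hpow2 q j]
    field_simp
    rw [one_div, inv_pow, mul_right_comm, mul_inv_cancel₀ (pow_ne_zero j hΔne), one_mul]
end

section
/- With $c = aq^{1/2}$, $\alpha = 1/2$, and $a$ replaced by $q^a$, the limits $\lim_{q\to 1^-}\frac{A_n}{(1-q^{1/2})^2} = (n + \frac{4a-1}{2} + 1)(n - N)$ and $\lim_{q\to 1^-}\frac{C_n}{(1-q^{1/2})^2} = n(n - \frac{4a-1}{2} - N - 1)$ hold, where $A_n, C_n$ are the $q$-para-Racah limit coefficients for $N = 2j+1$ with $n \neq j, j+1$. -/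
open Filter Topology Set

lemma lim_rpow15 (x : ℝ) : Tendsto (fun q : ℝ => q ^ x) (𝓝[Ioo (0:ℝ) 1] 1) (𝓝 1) := by
  have h : ContinuousAt (fun q : ℝ => q ^ x) 1 :=
    Real.continuousAt_rpow_const 1 x (Or.inl one_ne_zero)
  simpa using h.continuousWithinAt.tendsto

lemma slope_lim15 (x : ℝ) :
    Tendsto (fun q : ℝ => (1 - q ^ x)/(1 - q)) (𝓝[Ioo (0:ℝ) 1] 1) (𝓝 x) := by
  have h : HasDerivAt (fun t : ℝ => t ^ x) (x * (1:ℝ) ^ (x - 1)) 1 :=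
    Real.hasDerivAt_rpow_const (Or.inl one_ne_zero)
  have h2 := hasDerivAt_iff_tendsto_slope.mp h
  rw [Real.one_rpow, mul_one] at h2
  have h3 : Tendsto (slope (fun t:ℝ => t ^ x) 1) (𝓝[Ioo (0:ℝ) 1] 1) (𝓝 x) :=
    h2.mono_left (nhdsWithin_mono 1 (fun q hq => ne_of_lt hq.2))
  apply h3.congr
  intro q
  rw [slope_def_field, Real.one_rpow]
  rw [← neg_sub (q ^ x) 1, ← neg_sub q 1, neg_div_neg_eq]

lemma one_sub_rpow_ne15 {q : ℝ} (hq : q ∈ Ioo (0:ℝ) 1) {y : ℝ} (hy : y ≠ 0) :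
    1 - q ^ y ≠ 0 := by
  rcases lt_or_gt_of_ne hy with h|h
  · have : 1 < q ^ y := by
      rw [Real.one_lt_rpow_iff_of_pos hq.1]; exact Or.inr ⟨hq.2, h⟩
    linarith
  · have : q ^ y < 1 := Real.rpow_lt_one hq.1.le hq.2 h
    linarith

lemma key15 (x : ℝ) :
    Tendsto (fun q : ℝ => (1 - q ^ x)/(1 - q ^ ((1:ℝ)/2))) (𝓝[Ioo (0:ℝ) 1] 1)
      (𝓝 (2*x)) := by
  have h := (slope_lim15 x).div (slope_lim15 (1/2)) (by norm_num)
  have e : x / ((1:ℝ)/2) = 2*x := by ring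
  rw [e] at h
  apply h.congr'
  filter_upwards [self_mem_nhdsWithin] with q hq
  have h1 : (1:ℝ) - q ≠ 0 := by have := hq.2; intro h; linarith [sub_eq_zero.mp h]
  have h2 : (1:ℝ) - q ^ ((1:ℝ)/2) ≠ 0 := one_sub_rpow_ne15 hq (by norm_num)
  simp only [Pi.div_apply]
  field_simp

/-- With `c = aq^{1/2}`, `α = 1/2`, and `a ↦ q^a`, the `q`-para-Racah
limit coefficients `A_n, C_n` (for `N = 2j+1`, `n ≠ j, j+1`) satisfy
`lim_{q→1⁻} A_n/(1-q^{1/2})² = (n + (4a-1)/2 + 1)(n - N)` and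
`lim_{q→1⁻} C_n/(1-q^{1/2})² = n(n - (4a-1)/2 - N - 1)`,
matching the dual-Hahn recurrence coefficients with `γ = δ = (4a-1)/2`. -/
theorem stmt_15 (a : ℝ) (j N : ℕ) (hN : N = 2 * j + 1)
    (n : ℕ) (hn : n ≤ N) (hnj : n ≠ j) (hnj1 : n ≠ j + 1)
    (A C : ℝ → ℝ)
    (hA : ∀ q : ℝ, 0 < q → q < 1 → A q =
      ((1 - q ^ (2 * a + 1 / 2) * q ^ n) *
          (q ^ (a + 1 / 2) - q ^ a * q ^ ((n : ℤ) - (j : ℤ))) *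
          (1 - q ^ ((n : ℤ) - 2 * (j : ℤ) - 1))) /
        (q ^ (2 * a + 1 / 2) * (1 - q ^ (2 * (n : ℤ) - 2 * (j : ℤ) - 1)) *
          (1 + q ^ ((n : ℤ) - (j : ℤ)))))
    (hC : ∀ q : ℝ, 0 < q → q < 1 → C q =
      ((1 - q ^ (n : ℕ)) * (q ^ a - q ^ (a + 1 / 2) * q ^ ((n : ℤ) - (j : ℤ) - 1)) *
          (q ^ (2 * a + 1 / 2) - q ^ ((n : ℤ) - 2 * (j : ℤ) - 1))) /
        (q ^ (2 * a + 1 / 2) * (1 + q ^ ((n : ℤ) - (j : ℤ) - 1)) *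
          (1 - q ^ (2 * (n : ℤ) - 2 * (j : ℤ) - 1)))) :
    Tendsto (fun q : ℝ => A q / (1 - q ^ ((1 : ℝ) / 2)) ^ 2)
      (nhdsWithin 1 (Set.Ioo (0 : ℝ) 1))
      (𝓝 (((n : ℝ) + (4 * a - 1) / 2 + 1) * ((n : ℝ) - (N : ℝ)))) ∧
    Tendsto (fun q : ℝ => C q / (1 - q ^ ((1 : ℝ) / 2)) ^ 2)
      (nhdsWithin 1 (Set.Ioo (0 : ℝ) 1))
      (𝓝 ((n : ℝ) * ((n : ℝ) - (4 * a - 1) / 2 - (N : ℝ) - 1))) := by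
  have hx4 : 2*(n:ℝ) - 2*(j:ℝ) - 1 ≠ 0 := by
    intro h
    have h2 : ((2*n : ℕ) : ℝ) = ((2*j+1 : ℕ) : ℝ) := by push_cast; linarith
    have h3 : 2*n = 2*j+1 := Nat.cast_injective h2
    omega
  have hNr : (N : ℝ) = 2*(j:ℝ) + 1 := by rw [hN]; push_cast; ring
  constructor
  · -- A part
    have hNum := ((key15 (2*a+1/2+(n:ℝ))).mul
        ((lim_rpow15 a).mul ((key15 ((n:ℝ)-(j:ℝ))).sub (key15 (1/2))))).mul
        (key15 ((n:ℝ)-2*(j:ℝ)-1))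
    have hDen := ((lim_rpow15 (2*a+1/2)).mul (key15 (2*(n:ℝ)-2*(j:ℝ)-1))).mul
        (tendsto_const_nhds.add (lim_rpow15 ((n:ℝ)-(j:ℝ))) : Tendsto
          (fun q : ℝ => 1 + q ^ ((n:ℝ)-(j:ℝ))) (𝓝[Ioo (0:ℝ) 1] 1) (𝓝 (1+1)))
    have hden_ne : (1:ℝ) * (2*(2*(n:ℝ)-2*(j:ℝ)-1)) * (1+1) ≠ 0 := by
      have : (1:ℝ) * (2*(2*(n:ℝ)-2*(j:ℝ)-1)) * (1+1) = 4*(2*(n:ℝ)-2*(j:ℝ)-1) := by ring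
      rw [this]; exact mul_ne_zero (by norm_num) hx4
    have hdiv := hNum.div hDen hden_ne
    have hval : 2*(2*a+1/2+(n:ℝ)) * (1 * (2*((n:ℝ)-(j:ℝ)) - 2*(1/2))) *
        (2*((n:ℝ)-2*(j:ℝ)-1)) / ((1:ℝ) * (2*(2*(n:ℝ)-2*(j:ℝ)-1)) * (1+1)) =
        ((n : ℝ) + (4 * a - 1) / 2 + 1) * ((n : ℝ) - (N : ℝ)) := by
      rw [div_eq_iff hden_ne, hNr]; ring
    rw [hval] at hdiv
    apply hdiv.congr'
    filter_upwards [self_mem_nhdsWithin] with q hq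
    obtain ⟨hq0, hq1⟩ := hq
    rw [hA q hq0 hq1]
    have hs : 1 - q ^ ((1:ℝ)/2) ≠ 0 := one_sub_rpow_ne15 ⟨hq0, hq1⟩ (by norm_num)
    have hg1 : q ^ (2*a+1/2) ≠ 0 := (Real.rpow_pos_of_pos hq0 _).ne'
    have hg2 : 1 - q ^ (2*(n:ℝ)-2*(j:ℝ)-1) ≠ 0 := one_sub_rpow_ne15 ⟨hq0, hq1⟩ hx4
    have hg3 : 1 + q ^ ((n:ℝ)-(j:ℝ)) ≠ 0 := by
      have := Real.rpow_pos_of_pos hq0 ((n:ℝ)-(j:ℝ)); linarith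
    have e1 : q ^ (2*a+1/2) * q ^ n = q ^ (2*a+1/2+(n:ℝ)) := by
      rw [← Real.rpow_natCast q n, ← Real.rpow_add hq0]
    have e2 : q ^ ((n:ℤ)-(j:ℤ)) = q ^ ((n:ℝ)-(j:ℝ)) := by
      rw [← Real.rpow_intCast q ((n:ℤ)-(j:ℤ))]; congr 1; push_cast; ring
    have e3 : q ^ ((n:ℤ)-2*(j:ℤ)-1) = q ^ ((n:ℝ)-2*(j:ℝ)-1) := by
      rw [← Real.rpow_intCast q ((n:ℤ)-2*(j:ℤ)-1)]; congr 1; push_cast; ring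
    have e4 : q ^ (2*(n:ℤ)-2*(j:ℤ)-1) = q ^ (2*(n:ℝ)-2*(j:ℝ)-1) := by
      rw [← Real.rpow_intCast q (2*(n:ℤ)-2*(j:ℤ)-1)]; congr 1; push_cast; ring
    have e5 : q ^ (a+1/2) = q ^ a * q ^ ((1:ℝ)/2) := Real.rpow_add hq0 a (1/2)
    rw [e1, e2, e3, e4, e5]
    simp only [Pi.div_apply]
    field_simp
    ring
  · -- C part
    have hNum := ((key15 ((n:ℝ))).mul
        ((lim_rpow15 a).mul (key15 ((n:ℝ)-(j:ℝ)-1/2)))).mul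
        ((key15 ((n:ℝ)-2*(j:ℝ)-1)).sub (key15 (2*a+1/2)))
    have hDen := ((lim_rpow15 (2*a+1/2)).mul
        (tendsto_const_nhds.add (lim_rpow15 ((n:ℝ)-(j:ℝ)-1)) : Tendsto
          (fun q : ℝ => 1 + q ^ ((n:ℝ)-(j:ℝ)-1)) (𝓝[Ioo (0:ℝ) 1] 1) (𝓝 (1+1)))).mul
        (key15 (2*(n:ℝ)-2*(j:ℝ)-1))
    have hden_ne : (1:ℝ) * (1+1) * (2*(2*(n:ℝ)-2*(j:ℝ)-1)) ≠ 0 := by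
      have : (1:ℝ) * (1+1) * (2*(2*(n:ℝ)-2*(j:ℝ)-1)) = 4*(2*(n:ℝ)-2*(j:ℝ)-1) := by ring
      rw [this]; exact mul_ne_zero (by norm_num) hx4
    have hdiv := hNum.div hDen hden_ne
    have hval : 2*(n:ℝ) * (1 * (2*((n:ℝ)-(j:ℝ)-1/2))) *
        (2*((n:ℝ)-2*(j:ℝ)-1) - 2*(2*a+1/2)) / ((1:ℝ) * (1+1) * (2*(2*(n:ℝ)-2*(j:ℝ)-1))) =
        (n : ℝ) * ((n : ℝ) - (4 * a - 1) / 2 - (N : ℝ) - 1) := by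
      rw [div_eq_iff hden_ne, hNr]; ring
    rw [hval] at hdiv
    apply hdiv.congr'
    filter_upwards [self_mem_nhdsWithin] with q hq
    obtain ⟨hq0, hq1⟩ := hq
    rw [hC q hq0 hq1]
    have hs : 1 - q ^ ((1:ℝ)/2) ≠ 0 := one_sub_rpow_ne15 ⟨hq0, hq1⟩ (by norm_num)
    have hg1 : q ^ (2*a+1/2) ≠ 0 := (Real.rpow_pos_of_pos hq0 _).ne'
    have hg2 : 1 - q ^ (2*(n:ℝ)-2*(j:ℝ)-1) ≠ 0 := one_sub_rpow_ne15 ⟨hq0, hq1⟩ hx4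
    have hg3 : 1 + q ^ ((n:ℝ)-(j:ℝ)-1) ≠ 0 := by
      have := Real.rpow_pos_of_pos hq0 ((n:ℝ)-(j:ℝ)-1); linarith
    have e1 : (q : ℝ) ^ (n : ℕ) = q ^ ((n:ℝ)) := (Real.rpow_natCast q n).symm
    have e2 : q ^ ((n:ℤ)-(j:ℤ)-1) = q ^ ((n:ℝ)-(j:ℝ)-1) := by
      rw [← Real.rpow_intCast q ((n:ℤ)-(j:ℤ)-1)]; congr 1; push_cast; ring
    have e3 : q ^ ((n:ℤ)-2*(j:ℤ)-1) = q ^ ((n:ℝ)-2*(j:ℝ)-1) := by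
      rw [← Real.rpow_intCast q ((n:ℤ)-2*(j:ℤ)-1)]; congr 1; push_cast; ring
    have e4 : q ^ (2*(n:ℤ)-2*(j:ℤ)-1) = q ^ (2*(n:ℝ)-2*(j:ℝ)-1) := by
      rw [← Real.rpow_intCast q (2*(n:ℤ)-2*(j:ℤ)-1)]; congr 1; push_cast; ring
    have e5 : q ^ (a+1/2) * q ^ ((n:ℝ)-(j:ℝ)-1) = q ^ a * q ^ ((n:ℝ)-(j:ℝ)-1/2) := by
      rw [← Real.rpow_add hq0, ← Real.rpow_add hq0]; congr 1; ring
    rw [e1, e2, e3, e4, e5]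
    simp only [Pi.div_apply]
    field_simp
    ring
end
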